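/- In the Artin group A(3,3,3) = ⟨s, t, r | sts = tst, trt = rtr, srs = rsr⟩, for every nonzero integer k, the subgroup generated by the two elements str and t^k s r^{-k} s^{-1} is isomorphic to the fundamental group of the Klein bottle, i.e., to the presented group ⟨a, b | a b a^{-1} = b^{-1}⟩. -/

import Mathlib

namespace A333

/-- The defining relations of the Artin group
`A(3,3,3) = ⟨s, t, r | sts = tst, trt = rtr, srs = rsr⟩`,
with `0, 1, 2` playing the roles of `s, t, r`. -/
def rels : Set (FreeGroup (Fin 3)) :=
  { FreeGroup.of 0 * FreeGroup.of 1 * FreeGroup.of 0 *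
      (FreeGroup.of 1 * FreeGroup.of 0 * FreeGroup.of 1)⁻¹,
    FreeGroup.of 1 * FreeGroup.of 2 * FreeGroup.of 1 *
      (FreeGroup.of 2 * FreeGroup.of 1 * FreeGroup.of 2)⁻¹,
    FreeGroup.of 0 * FreeGroup.of 2 * FreeGroup.of 0 *
      (FreeGroup.of 2 * FreeGroup.of 0 * FreeGroup.of 2)⁻¹ }

/-- The Artin group `A(3,3,3)`. -/
abbrev Grp := PresentedGroup rels

def s : Grp := PresentedGroup.of 0
def t : Grp := PresentedGroup.of 1
def r : Grp := PresentedGroup.of 2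

end A333

/-- The Klein bottle group `⟨a, b | a b a⁻¹ = b⁻¹⟩`,
with `false` playing the role of `a` and `true` the role of `b`. -/
abbrev KleinBottleGroup : Type :=
  PresentedGroup ({FreeGroup.of false * FreeGroup.of true *
    (FreeGroup.of false)⁻¹ * FreeGroup.of true} : Set (FreeGroup Bool))

/-!
Write `x = str` and `y = tᵏ s r⁻ᵏ s⁻¹`. Three applications of the braid relations, each in the
form `u vᵐ u⁻¹ = v⁻¹ uᵐ v`, give `x y x⁻¹ = y⁻¹`, so `a ↦ x, b ↦ y` defines a homomorphism from
the Klein bottle group onto `⟨x, y⟩`. Every element of the Klein bottle group is `bⁿ aᵐ`, so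
injectivity amounts to `yⁿ xᵐ = 1 → n = m = 0`. The degree map to `ℤ` sends `x` to `3` and `y`
to `0`, whence `m = 0`. The representation `s, r ↦ T^ε, t ↦ (S T S⁻¹)^ε` into `SL(2, ℤ)`, with
`ε = -sign k`, sends `y` to `!![1, |k|; |k|, k² + 1]`; its powers have positive entries, so `y`
has infinite order and `n = 0`.
-/

section Braid

variable {G : Type*} [Group G] {a b : G}

theorem mul_zpow_mul_inv_of_braid (h : a * b * a = b * a * b) (m : ℤ) :
    a * b ^ m * a⁻¹ = b⁻¹ * a ^ m * b := by
  have hconj : a * b * a⁻¹ = b⁻¹ * a * b :=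
    calc a * b * a⁻¹ = b⁻¹ * (b * a * b) * a⁻¹ := by group
      _ = b⁻¹ * a * b := by rw [← h]; group
  rw [← conj_zpow, hconj]
  simpa only [inv_inv] using conj_zpow (a := b⁻¹) (b := a) (i := m)

theorem inv_braid (h : a * b * a = b * a * b) : a⁻¹ * b⁻¹ * a⁻¹ = b⁻¹ * a⁻¹ * b⁻¹ := by
  simpa only [mul_inv_rev, mul_assoc] using congrArg (·⁻¹) h

end Braid

section KleinRelation

variable {G : Type*} [Group G] {a b : G}

theorem mul_zpow_of_conj_eq_inv (h : a * b * a⁻¹ = b⁻¹) (p : ℤ) : a * b ^ p = b ^ (-p) * a := by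
  rw [← mul_inv_eq_iff_eq_mul, ← conj_zpow, h, inv_zpow']

theorem exists_zpow_mul_zpow_eq_zpow_mul_zpow (h : a * b * a⁻¹ = b⁻¹) (m p : ℤ) :
    ∃ q : ℤ, a ^ m * b ^ p = b ^ q * a ^ m := by
  induction m using Int.induction_on generalizing p with
  | zero => exact ⟨p, by simp⟩
  | succ m ih =>
    obtain ⟨q, hq⟩ := ih p
    refine ⟨-q, ?_⟩
    rw [add_comm, zpow_one_add, mul_assoc, hq, ← mul_assoc, mul_zpow_of_conj_eq_inv h, mul_assoc]
  | pred m ih =>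
    obtain ⟨q, hq⟩ := ih p
    refine ⟨-q, ?_⟩
    have hinv : a⁻¹ * b ^ q = b ^ (-q) * a⁻¹ := by
      rw [inv_mul_eq_iff_eq_mul, ← mul_assoc, mul_zpow_of_conj_eq_inv h, neg_neg,
        mul_inv_cancel_right]
    rw [sub_eq_neg_add, zpow_add, zpow_neg_one, mul_assoc, hq, ← mul_assoc, hinv, mul_assoc]

theorem exists_eq_zpow_mul_zpow_of_mem_closure (h : a * b * a⁻¹ = b⁻¹) {g : G}
    (hg : g ∈ Subgroup.closure {a, b}) : ∃ n m : ℤ, g = b ^ n * a ^ m := by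
  induction hg using Subgroup.closure_induction with
  | mem g hg =>
    rcases hg with rfl | rfl
    · exact ⟨0, 1, by simp⟩
    · exact ⟨1, 0, by simp⟩
  | one => exact ⟨0, 0, by simp⟩
  | mul g g' _ _ ih ih' =>
    obtain ⟨n, m, rfl⟩ := ih
    obtain ⟨n', m', rfl⟩ := ih'
    obtain ⟨q, hq⟩ := exists_zpow_mul_zpow_eq_zpow_mul_zpow h m n'
    exact ⟨n + q, m + m', by rw [zpow_add, zpow_add, mul_assoc, ← mul_assoc (a ^ m), hq]; group⟩
  | inv g _ ih =>
    obtain ⟨n, m, rfl⟩ := ih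
    obtain ⟨q, hq⟩ := exists_zpow_mul_zpow_eq_zpow_mul_zpow h (-m) (-n)
    exact ⟨q, -m, by rw [← hq]; group⟩

end KleinRelation

namespace Matrix

variable {n R : Type*} [Fintype n] [DecidableEq n]
  [Semiring R] [PartialOrder R] [IsStrictOrderedRing R]

theorem pow_succ_apply_pos {M : Matrix n n R} (hM : ∀ i j, 0 < M i j) (k : ℕ) (i j : n) :
    0 < (M ^ (k + 1)) i j := by
  induction k generalizing j with
  | zero => simpa using hM i j
  | succ k ih =>
    rw [pow_succ, mul_apply]
    exact Finset.sum_pos (fun l _ => mul_pos (ih l) (hM l j)) ⟨i, Finset.mem_univ i⟩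

theorem not_isOfFinOrder_of_apply_pos [Nontrivial n] {M : Matrix n n R}
    (hM : ∀ i j, 0 < M i j) : ¬IsOfFinOrder M := by
  rw [isOfFinOrder_iff_pow_eq_one]
  rintro ⟨k, hk, hMk⟩
  obtain ⟨i, j, hij⟩ := exists_pair_ne n
  obtain ⟨k, rfl⟩ := Nat.exists_eq_add_one.mpr hk
  simpa [hMk, one_apply_ne hij] using pow_succ_apply_pos hM k i j

end Matrix

namespace ModularGroup

open Matrix.SpecialLinearGroup MatrixGroups

theorem T_mul_conj_T_mul_T :
    T * (S * T * S⁻¹) * T = S * T * S⁻¹ * T * (S * T * S⁻¹) := by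
  ext i j; fin_cases i <;> fin_cases j <;> simp [coe_inv, Matrix.adjugate_fin_two]

theorem coe_conj_T_zpow_mul_T_zpow (m : ℤ) :
    ((S * T * S⁻¹) ^ (-m) * T ^ m : SL(2, ℤ)) = !![1, m; m, m ^ 2 + 1] := by
  rw [conj_zpow]
  simp [coe_T_zpow, coe_inv, Matrix.adjugate_fin_two]
  ring_nf

end ModularGroup

namespace A333

theorem s_mul_t_mul_s : s * t * s = t * s * t :=
  PresentedGroup.mk_eq_mk_of_mul_inv_mem (by simp [rels])

theorem t_mul_r_mul_t : t * r * t = r * t * r :=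
  PresentedGroup.mk_eq_mk_of_mul_inv_mem (by simp [rels])

theorem s_mul_r_mul_s : s * r * s = r * s * r :=
  PresentedGroup.mk_eq_mk_of_mul_inv_mem (by simp [rels])

section LiftOfBraid

variable {G : Type*} [Group G] (a b : G) (h : a * b * a = b * a * b)

def liftOfBraid : Grp →* G :=
  PresentedGroup.toGroup (f := ![a, b, a]) <| by
    simp only [rels, Set.forall_mem_insert, Set.mem_singleton_iff, forall_eq, map_mul, map_inv,
      FreeGroup.lift_apply_of, mul_inv_eq_one]
    exact ⟨h, h.symm, rfl⟩

@[simp] theorem liftOfBraid_s : liftOfBraid a b h s = a := PresentedGroup.toGroup.of _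
@[simp] theorem liftOfBraid_t : liftOfBraid a b h t = b := PresentedGroup.toGroup.of _
@[simp] theorem liftOfBraid_r : liftOfBraid a b h r = a := PresentedGroup.toGroup.of _

theorem liftOfBraid_apply (k : ℤ) :
    liftOfBraid a b h (t ^ k * s * r ^ (-k) * s⁻¹) = b ^ k * a ^ (-k) := by
  simp only [map_mul, map_zpow, map_inv, liftOfBraid_s, liftOfBraid_t, liftOfBraid_r]
  group

end LiftOfBraid

theorem str_conj_eq_inv (k : ℤ) :
    s * t * r * (t ^ k * s * r ^ (-k) * s⁻¹) * (s * t * r)⁻¹ = (t ^ k * s * r ^ (-k) * s⁻¹)⁻¹ :=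
  calc s * t * r * (t ^ k * s * r ^ (-k) * s⁻¹) * (s * t * r)⁻¹
      = s * t * r * t ^ k * (s * r ^ (-k) * s⁻¹) * r⁻¹ * t⁻¹ * s⁻¹ := by group
    _ = s * t * (r * t ^ k * r⁻¹) * s ^ (-k) * t⁻¹ * s⁻¹ := by
      rw [mul_zpow_mul_inv_of_braid s_mul_r_mul_s]; group
    _ = s * r ^ k * (t * s ^ (-k) * t⁻¹) * s⁻¹ := by
      rw [mul_zpow_mul_inv_of_braid t_mul_r_mul_t.symm]; group
    _ = (t ^ k * s * r ^ (-k) * s⁻¹)⁻¹ := by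
      rw [mul_zpow_mul_inv_of_braid s_mul_t_mul_s.symm]; group

open ModularGroup MatrixGroups in
theorem not_isOfFinOrder {k : ℤ} (hk : k ≠ 0) : ¬IsOfFinOrder (t ^ k * s * r ^ (-k) * s⁻¹) := by
  obtain ⟨a, b, h, hab⟩ : ∃ (a b : SL(2, ℤ)) (h : a * b * a = b * a * b),
      (liftOfBraid a b h (t ^ k * s * r ^ (-k) * s⁻¹) : Matrix (Fin 2) (Fin 2) ℤ) =
        !![1, |k|; |k|, |k| ^ 2 + 1] := by
    rcases hk.lt_or_gt with hneg | hpos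
    · refine ⟨T, S * T * S⁻¹, T_mul_conj_T_mul_T, ?_⟩
      rw [liftOfBraid_apply, abs_of_neg hneg, ← coe_conj_T_zpow_mul_T_zpow, neg_neg]
    · refine ⟨T⁻¹, (S * T * S⁻¹)⁻¹, inv_braid T_mul_conj_T_mul_T, ?_⟩
      rw [liftOfBraid_apply, abs_of_pos hpos, ← coe_conj_T_zpow_mul_T_zpow, inv_zpow', inv_zpow',
        neg_neg]
  have hpos : ∀ i j, 0 < (!![1, |k|; |k|, |k| ^ 2 + 1] : Matrix (Fin 2) (Fin 2) ℤ) i j := by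
    simp [Fin.forall_fin_two, abs_pos.mpr hk, sq_nonneg]
  intro hfin
  exact Matrix.not_isOfFinOrder_of_apply_pos hpos <| hab ▸
    (Matrix.SpecialLinearGroup.coeMonoidHom.comp (liftOfBraid a b h)).isOfFinOrder hfin

theorem eq_zero_of_zpow_mul_zpow_eq_one {k n m : ℤ} (hk : k ≠ 0)
    (h : (t ^ k * s * r ^ (-k) * s⁻¹) ^ n * (s * t * r) ^ m = 1) : n = 0 ∧ m = 0 := by
  have hm : m = 0 := by
    have hdeg :=
      congrArg (fun g => (liftOfBraid (.ofAdd 1 : Multiplicative ℤ) (.ofAdd 1) rfl g).toAdd) h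
    simp at hdeg
    omega
  subst hm
  rw [zpow_zero, mul_one] at h
  by_contra hn
  exact not_isOfFinOrder hk (isOfFinOrder_iff_zpow_eq_one.mpr ⟨n, by simpa using hn, h⟩)

end A333

namespace KleinBottleGroup

def a : KleinBottleGroup := PresentedGroup.of false
def b : KleinBottleGroup := PresentedGroup.of true

theorem a_mul_b_mul_a_inv : a * b * a⁻¹ = b⁻¹ :=
  eq_inv_of_mul_eq_one_left (PresentedGroup.one_of_mem rfl)

theorem closure_a_b : Subgroup.closure {a, b} = ⊤ := by
  rw [← PresentedGroup.closure_range_of, Bool.range_eq]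
  rfl

section Lift

variable {G : Type*} [Group G] {x y : G} (h : x * y * x⁻¹ = y⁻¹)

def lift : KleinBottleGroup →* G :=
  PresentedGroup.toGroup (f := fun i => bif i then y else x) <| by
    simpa [mul_eq_one_iff_eq_inv] using h

@[simp] theorem lift_a : lift h a = x := PresentedGroup.toGroup.of _
@[simp] theorem lift_b : lift h b = y := PresentedGroup.toGroup.of _

theorem range_lift : (lift h).range = Subgroup.closure {x, y} := by
  rw [MonoidHom.range_eq_map, ← closure_a_b, MonoidHom.map_closure, Set.image_pair, lift_a, lift_b]

theorem lift_injective (hxy : ∀ n m : ℤ, y ^ n * x ^ m = 1 → n = 0 ∧ m = 0) :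
    Function.Injective (lift h) := by
  refine (injective_iff_map_eq_one _).mpr fun g hg => ?_
  obtain ⟨n, m, rfl⟩ :=
    exists_eq_zpow_mul_zpow_of_mem_closure a_mul_b_mul_a_inv (closure_a_b ▸ Subgroup.mem_top g)
  obtain ⟨rfl, rfl⟩ := hxy n m (by simpa using hg)
  simp

end Lift

end KleinBottleGroup

open A333 in
/-- In `A(3,3,3)`, for every nonzero integer `k`, the subgroup generated by `str` and
`t^k s r^{-k} s⁻¹` is isomorphic to the fundamental group of the Klein bottle. -/
theorem A333_klein_bottle_subgroup (k : ℤ) (hk : k ≠ 0) :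
    Nonempty ((Subgroup.closure {s * t * r, t ^ k * s * r ^ (-k) * s⁻¹} : Subgroup A333.Grp)
      ≃* KleinBottleGroup) := by
  have hinj := KleinBottleGroup.lift_injective (str_conj_eq_inv k)
    fun _ _ => eq_zero_of_zpow_mul_zpow_eq_one hk
  exact ⟨(MulEquiv.subgroupCongr (KleinBottleGroup.range_lift _)).symm.trans
    (MonoidHom.ofInjective hinj).symm⟩
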